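/- arXiv:2304.11423 — 6 statements merged into one kernel-verified Lean document; each statement's English description precedes it below -/
import Mathlib

section
/- Let G be a finite simple graph on n vertices and let c be an integer with 2 ≤ c ≤ n − 2. If all induced subgraphs of G on c vertices have the same number of edges (that is, e(S) = e(S') for all vertex subsets S, S' of cardinality c), then G is either a complete graph or has no edges at all. -/
/-!
Deleting one vertex from a `(k+1)`-set `U` in all `k+1` possible ways counts every edge of `U`
exactly `k - 1` times, so `∑ₓ e(U \ x) = (k - 1) e(U)`. If `e` is constant on `k`-sets, the
left side does not depend on `U`, and for `k ≥ 2` neither does `e(U)`: constancy propagates from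
`c` up to `n - 1`. On `(n-1)`-sets, `e(V \ x) = m - deg x` makes the graph regular; on
`(n-2)`-sets, `e(V \ {x, y}) = m - deg x - deg y + [x ~ y]` then makes adjacency the same for
all pairs of distinct vertices.
-/

open Finset

/-- `e(S)`: the number of edges of the subgraph of `G` induced by the vertex set `S`. -/
def inducedSize {V : Type*} [Fintype V] [DecidableEq V] (G : SimpleGraph V)
    [DecidableRel G.Adj] (S : Finset V) : ℕ :=
  (G.edgeFinset.filter (· ∈ S.sym2)).card

lemma Finset.mem_sym2_erase_iff {V : Type*} [DecidableEq V] {U : Finset V} {x : V}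
    {f : Sym2 V} : f ∈ (U.erase x).sym2 ↔ f ∈ U.sym2 ∧ x ∉ f := by
  simp only [mem_sym2_iff, mem_erase]
  exact ⟨fun hf => ⟨fun a ha => (hf a ha).2, fun hx => (hf x hx).1 rfl⟩,
    fun ⟨hf, hx⟩ a ha => ⟨fun e => hx (e ▸ ha), hf a ha⟩⟩

lemma Finset.card_filter_mem_sym2_mk {V : Type*} [DecidableEq V] {U : Finset V} {a b : V}
    (hab : a ≠ b) (hU : s(a, b) ∈ U.sym2) :
    #{x ∈ U | x ∈ s(a, b)} = 2 := by
  obtain ⟨ha, hb⟩ := mk_mem_sym2_iff.mp hU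
  have : {x ∈ U | x ∈ s(a, b)} = {a, b} := by
    ext x
    simp only [mem_filter, Sym2.mem_iff, mem_insert, mem_singleton]
    constructor
    · exact And.right
    · rintro (rfl | rfl) <;> simp [ha, hb]
  rw [this, card_pair hab]

section InducedSize

variable {V : Type*} [Fintype V] [DecidableEq V] (G : SimpleGraph V) [DecidableRel G.Adj]

def EdgeCountConstant (k : ℕ) : Prop :=
  ∀ S S' : Finset V, #S = k → #S' = k → inducedSize G S = inducedSize G S'

lemma inducedSize_univ : inducedSize G univ = #G.edgeFinset := by
  simp [inducedSize]

lemma inducedSize_eq_erase_add (U : Finset V) (x : V) :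
    inducedSize G U
      = inducedSize G (U.erase x) + #{f ∈ G.edgeFinset | f ∈ U.sym2 ∧ x ∈ f} := by
  have hsplit := card_filter_add_card_filter_not (s := {f ∈ G.edgeFinset | f ∈ U.sym2})
    (p := fun f => x ∈ f)
  simp only [filter_filter] at hsplit
  simp only [inducedSize, mem_sym2_erase_iff]
  omega

lemma sum_card_incident_eq_two_mul (U : Finset V) :
    ∑ x ∈ U, #{f ∈ G.edgeFinset | f ∈ U.sym2 ∧ x ∈ f} = 2 * inducedSize G U := by
  simp only [inducedSize, card_filter]
  rw [sum_comm, mul_sum]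
  refine sum_congr rfl fun f hf => ?_
  by_cases hU : f ∈ U.sym2
  · simp only [hU, true_and, if_true, mul_one, ← card_filter]
    induction f with
    | _ a b => exact card_filter_mem_sym2_mk (G.ne_of_adj (G.mem_edgeFinset.mp hf)) hU
  · simp [hU]

/-- Each edge of `U` survives the deletion of all but two vertices of `U`. -/
lemma sum_inducedSize_erase_add_two_mul (U : Finset V) :
    ∑ x ∈ U, inducedSize G (U.erase x) + 2 * inducedSize G U = #U * inducedSize G U := by
  rw [← sum_card_incident_eq_two_mul, ← sum_add_distrib,
    sum_congr rfl fun x _ => (inducedSize_eq_erase_add G U x).symm, sum_const, smul_eq_mul]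

variable {G}

lemma EdgeCountConstant.succ {k : ℕ} (hk : 2 ≤ k) (h : EdgeCountConstant G k) :
    EdgeCountConstant G (k + 1) := by
  intro U U' hU hU'
  obtain ⟨x₀, hx₀⟩ := card_pos.mp (by omega : 0 < #U')
  -- `q` is the common number of edges on `k` vertices
  set q := inducedSize G (U'.erase x₀)
  have double_count : ∀ W : Finset V, #W = k + 1 → (k + 1) * q + 2 * inducedSize G W
      = (k + 1) * inducedSize G W := by
    intro W hW
    have hsum : ∑ x ∈ W, inducedSize G (W.erase x) = (k + 1) * q := by
      rw [sum_congr rfl fun x hx => h _ _ (by rw [card_erase_of_mem hx, hW]; rfl)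
        (by rw [card_erase_of_mem hx₀, hU']; rfl), sum_const, hW, smul_eq_mul]
    rw [← hsum, ← hW]
    exact sum_inducedSize_erase_add_two_mul G W
  have hU₁ := double_count U hU
  have hU₂ := double_count U' hU'
  have : (k - 1) * inducedSize G U = (k - 1) * inducedSize G U' := by
    zify [show 1 ≤ k by omega] at hU₁ hU₂ ⊢
    linear_combination hU₂ - hU₁
  exact Nat.eq_of_mul_eq_mul_left (by omega) this

lemma EdgeCountConstant.of_le {c k : ℕ} (hc : 2 ≤ c) (h : EdgeCountConstant G c)
    (hk : c ≤ k) :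
    EdgeCountConstant G k := by
  induction k, hk using Nat.le_induction with
  | base => exact h
  | succ k hck ih => exact ih.succ (hc.trans hck)

variable (G)

lemma card_filter_edgeFinset_mem_and_mem {x y : V} (hxy : x ≠ y) :
    #{f ∈ G.edgeFinset | x ∈ f ∧ y ∈ f} = if G.Adj x y then 1 else 0 := by
  have : {f ∈ G.edgeFinset | x ∈ f ∧ y ∈ f} = {f ∈ G.edgeFinset | f = s(x, y)} :=
    filter_congr fun f _ => Sym2.mem_and_mem_iff hxy
  rw [this, filter_eq']
  split_ifs <;> simp_all

lemma inducedSize_univ_erase_add_degree (x : V) :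
    inducedSize G (univ.erase x) + G.degree x = #G.edgeFinset := by
  rw [← inducedSize_univ, inducedSize_eq_erase_add G univ x, ← G.card_incidenceFinset_eq_degree,
    G.incidenceFinset_eq_filter]
  simp

lemma inducedSize_univ_erase_erase_add_degree_add_degree {x y : V} (hxy : x ≠ y) :
    inducedSize G ((univ.erase x).erase y) + G.degree x + G.degree y
      = #G.edgeFinset + if G.Adj x y then 1 else 0 := by
  -- split the edges at `y` into those avoiding `x` (the edges at `y` inside `V \ x`) and `s(x, y)`
  have hsplit := card_filter_add_card_filter_not (s := {f ∈ G.edgeFinset | y ∈ f})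
    (p := fun f => x ∈ f)
  simp only [filter_filter] at hsplit
  have hy := inducedSize_eq_erase_add G (univ.erase x) y
  simp only [mem_sym2_erase_iff, sym2_univ, mem_univ, true_and] at hy
  rw [← card_filter_edgeFinset_mem_and_mem G hxy, ← inducedSize_univ_erase_add_degree G x,
    ← G.card_incidenceFinset_eq_degree y, G.incidenceFinset_eq_filter]
  simp only [and_comm] at hsplit hy ⊢
  omega

variable {G}

lemma EdgeCountConstant.degree_eq (h : EdgeCountConstant G (Fintype.card V - 1)) (x y : V) :
    G.degree x = G.degree y := by
  have hx := inducedSize_univ_erase_add_degree G x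
  have hy := inducedSize_univ_erase_add_degree G y
  have := h _ _ (card_erase_of_mem (mem_univ x)) (card_erase_of_mem (mem_univ y))
  omega

lemma EdgeCountConstant.adj_iff_adj (h₁ : EdgeCountConstant G (Fintype.card V - 1))
    (h₂ : EdgeCountConstant G (Fintype.card V - 2)) {u v x y : V} (huv : u ≠ v)
    (hxy : x ≠ y) :
    G.Adj u v ↔ G.Adj x y := by
  have card_erase_erase {a b : V} (hab : a ≠ b) :
      #((univ.erase a).erase b) = Fintype.card V - 2 := by
    rw [card_erase_of_mem (mem_erase.mpr ⟨hab.symm, mem_univ b⟩),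
      card_erase_of_mem (mem_univ a), card_univ, Nat.sub_sub]
  have huv' := inducedSize_univ_erase_erase_add_degree_add_degree G huv
  have hxy' := inducedSize_univ_erase_erase_add_degree_add_degree G hxy
  have := h₂ _ _ (card_erase_erase huv) (card_erase_erase hxy)
  have := h₁.degree_eq u x
  have := h₁.degree_eq v y
  constructor <;> intro hadj <;> by_contra hnadj <;>
    simp only [hadj, hnadj, if_true, if_false] at huv' hxy' <;> omega

end InducedSize

lemma SimpleGraph.eq_top_or_eq_bot_of_adj_iff_adj {V : Type*} {G : SimpleGraph V}
    (h : ∀ ⦃u v x y : V⦄, u ≠ v → x ≠ y → (G.Adj u v ↔ G.Adj x y)) :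
    G = ⊤ ∨ G = ⊥ := by
  by_cases hadj : ∃ u v, G.Adj u v
  · obtain ⟨u, v, huv⟩ := hadj
    left
    ext x y
    exact ⟨G.ne_of_adj, fun hxy => (h huv.ne hxy).mp huv⟩
  · right
    ext x y
    simpa using not_exists.mp (not_exists.mp hadj x) y

/-- If `2 ≤ c ≤ n - 2` and all induced subgraphs of `G` on `c` vertices have the same
number of edges, then `G` is complete or edgeless. -/
theorem stmt_0 {V : Type*} [Fintype V] [DecidableEq V] (G : SimpleGraph V)
    [DecidableRel G.Adj] (c : ℕ) (hc2 : 2 ≤ c) (hcn : c ≤ Fintype.card V - 2)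
    (h : ∀ S S' : Finset V, S.card = c → S'.card = c →
      inducedSize G S = inducedSize G S') :
    G = ⊤ ∨ G = ⊥ := by
  have h₂ : EdgeCountConstant G (Fintype.card V - 2) := EdgeCountConstant.of_le hc2 h hcn
  have h₁ : EdgeCountConstant G (Fintype.card V - 1) := EdgeCountConstant.of_le hc2 h (by omega)
  exact SimpleGraph.eq_top_or_eq_bot_of_adj_iff_adj fun _ _ _ _ => h₁.adj_iff_adj h₂
end

section
/- Let G be a finite simple graph on n vertices and let c be an integer with 2 ≤ c ≤ n − 1. If all induced subgraphs of G on c vertices have the same number of edges (that is, e(S) = e(S') for all vertex subsets S, S' of cardinality c), then G is regular, i.e., all vertices of G have the same degree. -/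
open Finset

/-!
For distinct vertices `u, v` and any `(c - 1)`-set `A` avoiding both, the `c`-sets
`A ∪ {u}` and `A ∪ {v}` have `e(A) + |N(u) ∩ A|` and `e(A) + |N(v) ∩ A|` edges,
so `|N(u) ∩ A| = |N(v) ∩ A|`. Summing over all such `A`, in which every other vertex occurs
equally often, gives `|N(u) \ {v}| = |N(v) \ {u}|`, hence `d(u) = d(v)`.
-/

namespace Finset

variable {α : Type*} [DecidableEq α]

lemma card_filter_mem_powersetCard {W : Finset α} {a : α} (ha : a ∈ W) {k : ℕ} (hk : 0 < k) :
    #{A ∈ W.powersetCard k | a ∈ A} = (#W - 1).choose (k - 1) := by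
  simpa using card_filter_powersetCard_subset {a} W k (singleton_subset_iff.2 ha) hk

lemma sum_card_inter_powersetCard {W s : Finset α} (hs : s ⊆ W) {k : ℕ} (hk : 0 < k) :
    ∑ A ∈ W.powersetCard k, #(s ∩ A) = #s * (#W - 1).choose (k - 1) :=
  sum_card_inter fun _ ha => card_filter_mem_powersetCard (hs ha) hk

lemma card_eq_of_forall_powersetCard_card_inter_eq {W s t : Finset α} {k : ℕ} (hk : 0 < k)
    (hkW : k ≤ #W) (hs : s ⊆ W) (ht : t ⊆ W)
    (h : ∀ A ∈ W.powersetCard k, #(s ∩ A) = #(t ∩ A)) : #s = #t := by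
  have hsum := sum_congr rfl h
  rw [sum_card_inter_powersetCard hs hk, sum_card_inter_powersetCard ht hk] at hsum
  exact Nat.eq_of_mul_eq_mul_right (Nat.choose_pos (by omega)) hsum

end Finset

namespace SimpleGraph

variable {V : Type*} [Fintype V] [DecidableEq V] (G : SimpleGraph V) [DecidableRel G.Adj]

lemma edgeFinset_filter_mem_sym2_insert (u : V) (A : Finset V) :
    G.edgeFinset.filter (· ∈ (insert u A).sym2) =
      (G.neighborFinset u ∩ A).image (s(u, ·)) ∪ G.edgeFinset.filter (· ∈ A.sym2) := by
  ext e
  induction e using Sym2.inductionOn with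
  | hf a b =>
    simp only [mem_filter, mem_edgeFinset, mk_mem_sym2_iff, mem_insert, mem_union, mem_image,
      mem_inter, mem_neighborFinset, Sym2.eq_iff]
    constructor
    · rintro ⟨hab, ha | ha, hb | hb⟩
      · exact absurd (ha.trans hb.symm) hab.ne
      · exact Or.inl ⟨b, ⟨ha ▸ hab, hb⟩, Or.inl ⟨ha.symm, rfl⟩⟩
      · exact Or.inl ⟨a, ⟨hb ▸ hab.symm, ha⟩, Or.inr ⟨hb.symm, rfl⟩⟩
      · exact Or.inr ⟨hab, ha, hb⟩
    · rintro (⟨w, ⟨huw, hw⟩, ⟨rfl, rfl⟩ | ⟨rfl, rfl⟩⟩ | ⟨hab, ha, hb⟩)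
      · exact ⟨huw, Or.inl rfl, Or.inr hw⟩
      · exact ⟨huw.symm, Or.inr hw, Or.inl rfl⟩
      · exact ⟨hab, Or.inr ha, Or.inr hb⟩

lemma inducedSize_insert {u : V} {A : Finset V} (hu : u ∉ A) :
    inducedSize G (insert u A) = inducedSize G A + #(G.neighborFinset u ∩ A) := by
  have hdisj : Disjoint ((G.neighborFinset u ∩ A).image (s(u, ·)))
      (G.edgeFinset.filter (· ∈ A.sym2)) := by
    rw [Finset.disjoint_left]
    rintro _ hw h
    obtain ⟨w, -, rfl⟩ := mem_image.1 hw
    exact hu (mk_mem_sym2_iff.1 (mem_filter.1 h).2).1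
  rw [inducedSize, edgeFinset_filter_mem_sym2_insert G u A, card_union_of_disjoint hdisj,
    card_image_of_injective _ (fun _ _ => Sym2.congr_right.1), add_comm, inducedSize]

lemma degree_eq_card_erase_add_ite (u v : V) :
    G.degree u = #((G.neighborFinset u).erase v) + if G.Adj u v then 1 else 0 := by
  split_ifs with huv
  · exact (card_erase_add_one ((G.mem_neighborFinset u v).2 huv)).symm
  · rw [erase_eq_of_notMem (by simpa using huv), card_neighborFinset_eq_degree, add_zero]

lemma erase_neighborFinset_subset_compl_pair (u v : V) :
    (G.neighborFinset u).erase v ⊆ ({u, v} : Finset V)ᶜ := by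
  intro x hx
  obtain ⟨hxv, hux⟩ := mem_erase.1 hx
  simpa [hxv] using (G.ne_of_adj ((G.mem_neighborFinset u x).1 hux)).symm

lemma degree_eq_of_inducedSize_eq {c : ℕ} (hc2 : 2 ≤ c) (hcn : c ≤ Fintype.card V - 1)
    (h : ∀ S S' : Finset V, #S = c → #S' = c → inducedSize G S = inducedSize G S') (u v : V) :
    G.degree u = G.degree v := by
  obtain rfl | huv := eq_or_ne u v
  · rfl
  set W : Finset V := {u, v}ᶜ
  have hW : #W = Fintype.card V - 2 := by rw [card_compl, card_pair huv]
  have hinter : ∀ A ∈ W.powersetCard (c - 1),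
      #((G.neighborFinset u).erase v ∩ A) = #((G.neighborFinset v).erase u ∩ A) := by
    intro A hA
    obtain ⟨hAW, hAc⟩ := mem_powersetCard.1 hA
    have hu : u ∉ A := fun huA => by simpa [W] using hAW huA
    have hv : v ∉ A := fun hvA => by simpa [W] using hAW hvA
    have hsize := h (insert u A) (insert v A) (by rw [card_insert_of_notMem hu]; omega)
      (by rw [card_insert_of_notMem hv]; omega)
    rw [G.inducedSize_insert hu, G.inducedSize_insert hv] at hsize
    rw [erase_inter, erase_inter, erase_eq_of_notMem (fun hv' => hv (mem_inter.1 hv').2),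
      erase_eq_of_notMem (fun hu' => hu (mem_inter.1 hu').2)]
    omega
  have hvW : (G.neighborFinset v).erase u ⊆ W := by
    rw [show W = {v, u}ᶜ by rw [pair_comm]]
    exact G.erase_neighborFinset_subset_compl_pair v u
  have hcard := card_eq_of_forall_powersetCard_card_inter_eq (W := W) (by omega) (by omega)
    (G.erase_neighborFinset_subset_compl_pair u v) hvW hinter
  rw [G.degree_eq_card_erase_add_ite u v, G.degree_eq_card_erase_add_ite v u, hcard]
  simp only [G.adj_comm u v]

end SimpleGraph

/-- If `2 ≤ c ≤ n - 1` and all induced subgraphs of `G` on `c` vertices have the same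
number of edges, then `G` is regular. -/
theorem stmt_1 {V : Type*} [Fintype V] [DecidableEq V] (G : SimpleGraph V)
    [DecidableRel G.Adj] (c : ℕ) (hc2 : 2 ≤ c) (hcn : c ≤ Fintype.card V - 1)
    (h : ∀ S S' : Finset V, S.card = c → S'.card = c →
      inducedSize G S = inducedSize G S') :
    ∃ k : ℕ, ∀ v : V, G.degree v = k := by
  obtain ⟨v₀⟩ : Nonempty V := Fintype.card_pos_iff.1 (by omega)
  exact ⟨G.degree v₀, fun v => G.degree_eq_of_inducedSize_eq hc2 hcn h v v₀⟩
end

section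
/- Let G be a finite simple graph on n ≥ 4 vertices with m ≥ 1 edges, and let c be an integer with 2 ≤ c ≤ n − 1. Then there exists a vertex subset S of cardinality c such that, as real numbers, e(S) ≥ ((c−2)/(n−2))·[ ((n−c)/(n−3))·( Σ_{v ∈ V(G)} d(v)(d(v)−1) / m ) + ((c−3)/(n−3))·(m−1) ] + 1. -/
open Finset

theorem Nat.cast_descFactorial_succ {R : Type*} [Ring R] (a k : ℕ) :
    (a.descFactorial (k + 1) : R) = (a - k) * a.descFactorial k := by
  rcases le_or_gt k a with hka | hak
  · rw [Nat.descFactorial_succ, Nat.cast_mul, Nat.cast_sub hka]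
  · rw [Nat.descFactorial_eq_zero_iff_lt.2 hak, Nat.descFactorial_eq_zero_iff_lt.2 (by omega)]
    simp

/-- The proportion of the `c`-subsets of an `n`-set that contain a fixed `t`-subset. -/
noncomputable def supersetDensity (n c t : ℕ) : ℝ := c.descFactorial t / n.descFactorial t

theorem supersetDensity_succ (n c t : ℕ) :
    supersetDensity n c (t + 1) = supersetDensity n c t * (c - t) / (n - t) := by
  simp only [supersetDensity, Nat.cast_descFactorial_succ]
  rw [mul_div_mul_comm]
  ring

theorem supersetDensity_two_pos {n c : ℕ} (hc : 2 ≤ c) (hn : 2 ≤ n) :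
    0 < supersetDensity n c 2 := by
  have hc' : (2 : ℝ) ≤ c := by exact_mod_cast hc
  have hn' : (2 : ℝ) ≤ n := by exact_mod_cast hn
  rw [supersetDensity, Nat.cast_descFactorial_two, Nat.cast_descFactorial_two]
  exact div_pos (mul_pos (by linarith) (by linarith)) (mul_pos (by linarith) (by linarith))

section Supersets

variable {α : Type*} [DecidableEq α]

theorem card_filter_powersetCard_subset_mul_descFactorial {s T : Finset α} (hT : T ⊆ s) (c : ℕ) :
    #{S ∈ s.powersetCard c | T ⊆ S} * (#s).descFactorial #T
      = (#s).choose c * c.descFactorial #T := by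
  rcases le_or_gt #T c with hTc | hcT
  · rw [card_filter_powersetCard_subset T s c hT hTc, Nat.descFactorial_eq_factorial_mul_choose,
      Nat.descFactorial_eq_factorial_mul_choose, mul_left_comm ((#s).choose c),
      Nat.choose_mul hTc]
    ring
  · have hempty : {S ∈ s.powersetCard c | T ⊆ S} = ∅ := by
      refine filter_eq_empty_iff.2 fun S hS hTS => ?_
      have := card_le_card hTS
      rw [(mem_powersetCard.1 hS).2] at this
      omega
    rw [hempty, Nat.descFactorial_eq_zero_iff_lt.2 hcT, card_empty, zero_mul, mul_zero]

theorem cast_card_filter_powersetCard_subset {s T : Finset α} (hT : T ⊆ s) (c : ℕ) :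
    (#{S ∈ s.powersetCard c | T ⊆ S} : ℝ) = (#s).choose c * supersetDensity #s c #T := by
  have hne : ((#s).descFactorial #T : ℝ) ≠ 0 := by
    exact_mod_cast Nat.descFactorial_eq_zero_iff_lt.not.2 (not_lt.2 (card_le_card hT))
  rw [supersetDensity, ← mul_div_assoc, eq_div_iff hne]
  exact_mod_cast card_filter_powersetCard_subset_mul_descFactorial hT c

theorem sum_card_filter_subset_powersetCard {ι : Type*} {s : Finset α} (I : Finset ι)
    (f : ι → Finset α) (hf : ∀ i ∈ I, f i ⊆ s) (c : ℕ) :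
    ∑ S ∈ s.powersetCard c, (#{i ∈ I | f i ⊆ S} : ℝ)
      = (#s).choose c * ∑ i ∈ I, supersetDensity #s c #(f i) := by
  have hswap : ∑ S ∈ s.powersetCard c, #{i ∈ I | f i ⊆ S}
      = ∑ i ∈ I, #{S ∈ s.powersetCard c | f i ⊆ S} :=
    sum_card_bipartiteAbove_eq_sum_card_bipartiteBelow (fun S i => f i ⊆ S)
  rw [← Nat.cast_sum, hswap, Nat.cast_sum, mul_sum]
  exact sum_congr rfl fun i hi => cast_card_filter_powersetCard_subset (hf i hi) c

end Supersets

theorem Sym2.card_toFinset_inter_le_one {α : Type*} [DecidableEq α] {x y : Sym2 α}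
    (hxy : x ≠ y) : #(x.toFinset ∩ y.toFinset) ≤ 1 := by
  refine card_le_one.2 fun u hu w hw => by_contra fun huw => hxy ?_
  simp only [mem_inter, Sym2.mem_toFinset] at hu hw
  exact ((Sym2.mem_and_mem_iff huw).1 ⟨hu.1, hw.1⟩).trans
    ((Sym2.mem_and_mem_iff huw).1 ⟨hu.2, hw.2⟩).symm

theorem SimpleGraph.card_toFinset_of_mem_edgeFinset {V : Type*} [DecidableEq V]
    {G : SimpleGraph V} [Fintype G.edgeSet] {x : Sym2 V} (hx : x ∈ G.edgeFinset) :
    #x.toFinset = 2 :=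
  Sym2.card_toFinset_of_not_isDiag x (G.not_isDiag_of_mem_edgeSet (mem_edgeFinset.1 hx))

section InducedSize

variable {V : Type*} [Fintype V] [DecidableEq V] (G : SimpleGraph V) [DecidableRel G.Adj]

theorem inducedSize_eq_card_filter (S : Finset V) :
    inducedSize G S = #{x ∈ G.edgeFinset | x.toFinset ⊆ S} := by
  unfold inducedSize
  congr 1
  refine filter_congr fun x _ => ?_
  simp only [mem_sym2_iff, subset_iff, Sym2.mem_toFinset]

theorem inducedSize_sq_eq_card_filter (S : Finset V) :
    inducedSize G S ^ 2
      = #{p ∈ G.edgeFinset ×ˢ G.edgeFinset | p.1.toFinset ∪ p.2.toFinset ⊆ S} := by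
  rw [sq, inducedSize_eq_card_filter, ← card_product, ← filter_product]
  simp only [union_subset_iff]

theorem sum_offDiag_card_toFinset_inter {R : Type*} [CommRing R] :
    ∑ p ∈ G.edgeFinset.offDiag, (#(p.1.toFinset ∩ p.2.toFinset) : R)
      = ∑ v, (G.degree v : R) * (G.degree v - 1) := by
  have hinter (p : Sym2 V × Sym2 V) :
      p.1.toFinset ∩ p.2.toFinset = ({v | v ∈ p.1 ∧ v ∈ p.2} : Finset V) := by
    ext; simp
  have hoff (v : V) :
      (G.incidenceFinset v).offDiag = {p ∈ G.edgeFinset.offDiag | v ∈ p.1 ∧ v ∈ p.2} := by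
    ext; simp only [G.incidenceFinset_eq_filter, mem_offDiag, mem_filter]; tauto
  have hswap : ∑ p ∈ G.edgeFinset.offDiag, #(p.1.toFinset ∩ p.2.toFinset)
      = ∑ v, #(G.incidenceFinset v).offDiag := by
    simp only [hinter, hoff]
    exact sum_card_bipartiteAbove_eq_sum_card_bipartiteBelow
      (fun (p : Sym2 V × Sym2 V) v => v ∈ p.1 ∧ v ∈ p.2)
  rw [← Nat.cast_sum, hswap, Nat.cast_sum]
  refine sum_congr rfl fun v _ => ?_
  rw [offDiag_card, G.card_incidenceFinset_eq_degree, Nat.cast_sub (Nat.le_mul_self _)]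
  push_cast
  ring

theorem sum_edgeFinset_product_card_toFinset_union {R : Type*} [CommRing R] (g : ℕ → R) :
    ∑ p ∈ G.edgeFinset ×ˢ G.edgeFinset, g #(p.1.toFinset ∪ p.2.toFinset)
      = #G.edgeFinset * g 2 + (#G.edgeFinset * #G.edgeFinset - #G.edgeFinset) * g 4
        + (∑ v, (G.degree v : R) * (G.degree v - 1)) * (g 3 - g 4) := by
  have hdiag : ∀ p ∈ G.edgeFinset.diag, g #(p.1.toFinset ∪ p.2.toFinset) = g 2 := by
    rintro ⟨x, y⟩ hp
    obtain ⟨hx, rfl : x = y⟩ := mem_diag.1 hp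
    rw [union_self, G.card_toFinset_of_mem_edgeFinset hx]
  -- distinct edges meet in at most one vertex, so `g` is evaluated only at 3 and 4 off the diagonal
  have hoffDiag : ∀ p ∈ G.edgeFinset.offDiag, g #(p.1.toFinset ∪ p.2.toFinset)
      = g 4 + #(p.1.toFinset ∩ p.2.toFinset) * (g 3 - g 4) := by
    rintro ⟨x, y⟩ hp
    obtain ⟨hx, hy, hxy : x ≠ y⟩ := mem_offDiag.1 hp
    have hsum := card_union_add_card_inter x.toFinset y.toFinset
    rw [G.card_toFinset_of_mem_edgeFinset hx, G.card_toFinset_of_mem_edgeFinset hy] at hsum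
    obtain h | h : #(x.toFinset ∩ y.toFinset) = 0 ∨ #(x.toFinset ∩ y.toFinset) = 1 := by
      have := Sym2.card_toFinset_inter_le_one hxy
      omega
    · rw [h, show #(x.toFinset ∪ y.toFinset) = 4 by omega]; simp
    · rw [h, show #(x.toFinset ∪ y.toFinset) = 3 by omega]; simp
  rw [← diag_union_offDiag, sum_union (disjoint_diag_offDiag _), sum_congr rfl hdiag,
    sum_congr rfl hoffDiag, sum_add_distrib, ← sum_mul, sum_offDiag_card_toFinset_inter,
    sum_const, sum_const, diag_card, offDiag_card, nsmul_eq_mul, nsmul_eq_mul,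
    Nat.cast_sub (Nat.le_mul_self _), Nat.cast_mul]
  ring

theorem sum_inducedSize_powersetCard (c : ℕ) :
    ∑ S ∈ univ.powersetCard c, (inducedSize G S : ℝ)
      = (Fintype.card V).choose c * (#G.edgeFinset * supersetDensity (Fintype.card V) c 2) := by
  simp only [inducedSize_eq_card_filter]
  rw [sum_card_filter_subset_powersetCard _ _ (fun _ _ => subset_univ _), card_univ,
    sum_congr rfl fun x hx => by rw [G.card_toFinset_of_mem_edgeFinset hx], sum_const,
    nsmul_eq_mul]

theorem sum_inducedSize_sq_powersetCard (c : ℕ) :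
    ∑ S ∈ univ.powersetCard c, (inducedSize G S : ℝ) ^ 2
      = (Fintype.card V).choose c *
        (#G.edgeFinset * supersetDensity (Fintype.card V) c 2
          + (#G.edgeFinset * #G.edgeFinset - #G.edgeFinset) * supersetDensity (Fintype.card V) c 4
          + (∑ v, (G.degree v : ℝ) * (G.degree v - 1))
            * (supersetDensity (Fintype.card V) c 3 - supersetDensity (Fintype.card V) c 4)) := by
  simp only [← Nat.cast_pow, inducedSize_sq_eq_card_filter]
  rw [sum_card_filter_subset_powersetCard _ _ (fun _ _ => subset_univ _), card_univ,
    sum_edgeFinset_product_card_toFinset_union]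

end InducedSize

/-- A graph of order `n ≥ 4` and size `m ≥ 1` has, for every `2 ≤ c ≤ n - 1`, an induced
subgraph on `c` vertices of size at least
`((c-2)/(n-2)) * [ ((n-c)/(n-3)) * (Σ_v d(v)(d(v)-1) / m) + ((c-3)/(n-3)) * (m-1) ] + 1`. -/
theorem stmt_2 {V : Type*} [Fintype V] [DecidableEq V] (G : SimpleGraph V)
    [DecidableRel G.Adj] (hn : 4 ≤ Fintype.card V) (hm : 1 ≤ G.edgeFinset.card)
    (c : ℕ) (hc2 : 2 ≤ c) (hcn : c ≤ Fintype.card V - 1) :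
    ∃ S : Finset V, S.card = c ∧
      ((c : ℝ) - 2) / ((Fintype.card V : ℝ) - 2) *
        ( ((Fintype.card V : ℝ) - c) / ((Fintype.card V : ℝ) - 3) *
            ((∑ v : V, (G.degree v : ℝ) * ((G.degree v : ℝ) - 1)) / (G.edgeFinset.card : ℝ))
          + ((c : ℝ) - 3) / ((Fintype.card V : ℝ) - 3) * ((G.edgeFinset.card : ℝ) - 1) )
      + 1 ≤ (inducedSize G S : ℝ) := by
  obtain ⟨S₀, hS₀, hmax⟩ := exists_max_image (univ.powersetCard c) (inducedSize G)
    (powersetCard_nonempty.2 (by rw [card_univ]; omega))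
  refine ⟨S₀, (mem_powersetCard.1 hS₀).2, ?_⟩
  have hmoment : ∑ S ∈ univ.powersetCard c, (inducedSize G S : ℝ) ^ 2
      ≤ inducedSize G S₀ * ∑ S ∈ univ.powersetCard c, (inducedSize G S : ℝ) := by
    rw [mul_sum]
    refine sum_le_sum fun S hS => ?_
    rw [sq]
    exact mul_le_mul_of_nonneg_right (by exact_mod_cast hmax S hS) (Nat.cast_nonneg _)
  rw [sum_inducedSize_sq_powersetCard, sum_inducedSize_powersetCard,
    supersetDensity_succ _ _ 3, supersetDensity_succ _ _ 2, Nat.cast_ofNat, Nat.cast_ofNat]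
    at hmoment
  set n := Fintype.card V
  set m : ℝ := (#G.edgeFinset : ℝ)
  set d := supersetDensity n c 2
  have hK : (0 : ℝ) < n.choose c := by exact_mod_cast Nat.choose_pos (by omega)
  have hd : 0 < d := supersetDensity_two_pos hc2 (by omega)
  have hm' : 0 < m := Nat.cast_pos.2 hm
  have hn' : (4 : ℝ) ≤ n := by exact_mod_cast hn
  have hn2 : (n : ℝ) - 2 ≠ 0 := by linarith
  have hn3 : (n : ℝ) - 3 ≠ 0 := by linarith
  refine le_of_mul_le_mul_right (le_of_eq_of_le ?_ hmoment)
    (by positivity : 0 < (n.choose c : ℝ) * (m * d))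
  field_simp
  ring
end

section
/- Every tree T on n ≥ 2 vertices has at most 1 + 2^(n−1) independent sets, where an independent set is any subset of V(T) (the empty set included) containing no two adjacent vertices. Moreover, equality holds if and only if T is a star, i.e., one vertex adjacent to all other n − 1 vertices and no other edges. -/
/-!
Split the independent sets of `T` according to whether they contain a vertex `c`. If `T` is a
star with center `c`, those avoiding `c` are all `2^(n-1)` subsets of the leaves and the only
one containing `c` is `{c}`. Otherwise `T` has a vertex `c` of degree at least `2` and an edge
`xy` avoiding `c`: the independent sets avoiding `c` miss the `2^(n-3)` subsets of `V - c`
containing `{x, y}`, and those containing `c` avoid its neighbours, so there are at most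
`2^(n-3)` of them; hence at most `2^(n-1)` independent sets in all.
-/

open Finset

/-- `G` is a star: one center vertex adjacent to all other vertices, and no other edges. -/
def IsStarGraph {V : Type*} (G : SimpleGraph V) : Prop :=
  ∃ v : V, ∀ a b : V, G.Adj a b ↔ a ≠ b ∧ (a = v ∨ b = v)

namespace SimpleGraph

section IndepFinsets

variable {V : Type*} [Fintype V] [DecidableEq V] (G : SimpleGraph V) [DecidableRel G.Adj]

def indepFinsets : Finset (Finset V) :=
  univ.filter fun S => ∀ a ∈ S, ∀ b ∈ S, ¬ G.Adj a b

variable {G}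

@[simp]
theorem mem_indepFinsets {S : Finset V} :
    S ∈ G.indepFinsets ↔ ∀ a ∈ S, ∀ b ∈ S, ¬ G.Adj a b := by
  simp [indepFinsets]

theorem card_indepFinsets_eq (c : V) :
    #G.indepFinsets =
      #(G.indepFinsets.filter (c ∉ ·)) + #(G.indepFinsets.filter (c ∈ ·)) := by
  rw [add_comm]
  exact (card_filter_add_card_filter_not _).symm

theorem card_indepFinsets_filter_mem_le (c : V) :
    #(G.indepFinsets.filter (c ∈ ·)) ≤ 2 ^ (Fintype.card V - G.degree c - 1) := by
  have hc : {c} ⊆ (G.neighborFinset c)ᶜ := by simp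
  calc #(G.indepFinsets.filter (c ∈ ·))
      ≤ #(Icc {c} (G.neighborFinset c)ᶜ) := by
        refine card_le_card fun S hS => ?_
        rw [mem_filter, mem_indepFinsets] at hS
        rw [mem_Icc, singleton_subset_iff]
        exact ⟨hS.2, fun u hu => by simpa using hS.1 c hS.2 u hu⟩
    _ = 2 ^ (Fintype.card V - G.degree c - 1) := by
        rw [card_Icc_finset hc, card_compl, card_neighborFinset_eq_degree, card_singleton]

theorem card_indepFinsets_filter_notMem_le {c x y : V} (hxy : G.Adj x y) (hx : x ≠ c)
    (hy : y ≠ c) :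
    #(G.indepFinsets.filter (c ∉ ·)) ≤
      2 ^ (Fintype.card V - 1) - 2 ^ (Fintype.card V - 1 - 2) := by
  have hxy_sub : {x, y} ⊆ univ.erase c := by simp [insert_subset_iff, hx, hy]
  calc #(G.indepFinsets.filter (c ∉ ·))
      ≤ #((univ.erase c).powerset \ Icc {x, y} (univ.erase c)) := by
        refine card_le_card fun S hS => ?_
        rw [mem_filter, mem_indepFinsets] at hS
        simp only [mem_sdiff, mem_powerset, mem_Icc, insert_subset_iff, singleton_subset_iff]
        exact ⟨fun u hu => mem_erase.2 ⟨fun h => hS.2 (h ▸ hu), mem_univ u⟩,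
          fun h => hS.1 x h.1.1 y h.1.2 hxy⟩
    _ = 2 ^ (Fintype.card V - 1) - 2 ^ (Fintype.card V - 1 - 2) := by
        rw [card_sdiff_of_subset (fun S hS => mem_powerset.2 (mem_Icc.1 hS).2),
          card_Icc_finset hxy_sub, card_powerset, card_pair hxy.ne,
          card_erase_of_mem (mem_univ c), card_univ]

theorem card_indepFinsets_le_of_adj {c x y : V} (hc : 2 ≤ G.degree c) (hxy : G.Adj x y)
    (hx : x ≠ c) (hy : y ≠ c) : #G.indepFinsets ≤ 2 ^ (Fintype.card V - 1) := by
  have hmem := card_indepFinsets_filter_mem_le (G := G) c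
  have hnotMem := card_indepFinsets_filter_notMem_le hxy hx hy
  have hmem_le : 2 ^ (Fintype.card V - G.degree c - 1) ≤ 2 ^ (Fintype.card V - 1 - 2) :=
    Nat.pow_le_pow_right two_pos (by omega)
  have hpow_le : 2 ^ (Fintype.card V - 1 - 2) ≤ 2 ^ (Fintype.card V - 1) :=
    Nat.pow_le_pow_right two_pos (by omega)
  rw [card_indepFinsets_eq c]
  omega

theorem card_indepFinsets_of_isStar {c : V}
    (hc : ∀ a b, G.Adj a b ↔ a ≠ b ∧ (a = c ∨ b = c)) :
    #G.indepFinsets = 2 ^ (Fintype.card V - 1) + 1 := by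
  have hnotMem : G.indepFinsets.filter (c ∉ ·) = (univ.erase c).powerset := by
    ext S
    simp only [mem_filter, mem_indepFinsets, mem_powerset, subset_erase, subset_univ, true_and]
    refine ⟨And.right, fun hcS => ⟨fun a ha b hb hab => ?_, hcS⟩⟩
    rcases ((hc a b).1 hab).2 with rfl | rfl
    · exact hcS ha
    · exact hcS hb
  have hmem : G.indepFinsets.filter (c ∈ ·) = {{c}} := by
    ext S
    simp only [mem_filter, mem_indepFinsets, mem_singleton]
    refine ⟨fun ⟨hind, hcS⟩ => eq_singleton_iff_unique_mem.2 ⟨hcS, fun u hu => ?_⟩, ?_⟩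
    · by_contra hne
      exact hind u hu c hcS ((hc u c).2 ⟨hne, Or.inr rfl⟩)
    · rintro rfl
      simp
  rw [card_indepFinsets_eq c, hnotMem, hmem, card_powerset, card_erase_of_mem (mem_univ c),
    card_univ, card_singleton]

end IndepFinsets

theorem isStarGraph_of_forall_adj {V : Type*} {G : SimpleGraph V} {c : V} (hG : G.Connected)
    (h : ∀ a b, G.Adj a b → a = c ∨ b = c) : IsStarGraph G := by
  have adj_c : ∀ u, u ≠ c → G.Adj c u := by
    intro u hu
    obtain ⟨w⟩ := hG.preconnected u c
    cases w with
    | nil => exact absurd rfl hu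
    | cons hadj _ => exact (h _ _ hadj).resolve_left hu ▸ hadj.symm
  refine ⟨c, fun a b => ⟨fun hab => ⟨hab.ne, h a b hab⟩, ?_⟩⟩
  rintro ⟨hne, rfl | rfl⟩
  · exact adj_c b hne.symm
  · exact (adj_c a hne).symm

theorem exists_adj_ne_ne_of_not_isStarGraph {V : Type*} {G : SimpleGraph V} (hG : G.Connected)
    (hG' : ¬ IsStarGraph G) (c : V) : ∃ x y, G.Adj x y ∧ x ≠ c ∧ y ≠ c := by
  by_contra! h
  exact hG' (isStarGraph_of_forall_adj hG fun a b hab => or_iff_not_imp_left.2 (h a b hab))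

theorem IsTree.exists_two_le_degree {V : Type*} [Fintype V] {T : SimpleGraph V}
    [DecidableRel T.Adj] (hT : T.IsTree) (hV : 3 ≤ Fintype.card V) : ∃ c, 2 ≤ T.degree c := by
  classical
  by_contra! h
  have hsum : ∑ v, T.degree v = 2 * (Fintype.card V - 1) := by
    rw [T.sum_degrees_eq_twice_card_edges, ← hT.card_edgeFinset, Nat.add_sub_cancel]
  have hle : ∑ v, T.degree v ≤ Fintype.card V := by
    simpa using sum_le_sum fun v (_ : v ∈ univ) => Nat.lt_succ_iff.1 (h v)
  omega

end SimpleGraph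

theorem stmt_4_general {V : Type*} [Fintype V] (T : SimpleGraph V) (hT : T.IsTree) :
    {S : Finset V | ∀ a ∈ S, ∀ b ∈ S, ¬ T.Adj a b}.ncard ≤ 1 + 2 ^ (Fintype.card V - 1) ∧
    ({S : Finset V | ∀ a ∈ S, ∀ b ∈ S, ¬ T.Adj a b}.ncard = 1 + 2 ^ (Fintype.card V - 1) ↔
      IsStarGraph T) := by
  classical
  have hset : {S : Finset V | ∀ a ∈ S, ∀ b ∈ S, ¬ T.Adj a b} = ↑T.indepFinsets := by
    ext S
    simp
  rw [hset, Set.ncard_coe_finset]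
  by_cases hstar : IsStarGraph T
  · obtain ⟨c, hc⟩ := hstar
    have hcard := SimpleGraph.card_indepFinsets_of_isStar hc
    exact ⟨by omega, iff_of_true (by omega) ⟨c, hc⟩⟩
  · have hedge := SimpleGraph.exists_adj_ne_ne_of_not_isStarGraph hT.connected hstar
    obtain ⟨c₀⟩ := hT.connected.nonempty
    obtain ⟨x, y, hxy, hx, hy⟩ := hedge c₀
    have h3 : 3 ≤ Fintype.card V := by
      simpa [card_insert_of_notMem, hx.symm, hy.symm, hxy.ne] using card_le_univ {c₀, x, y}
    obtain ⟨c, hc⟩ := hT.exists_two_le_degree h3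
    obtain ⟨x, y, hxy, hx, hy⟩ := hedge c
    have hcard := SimpleGraph.card_indepFinsets_le_of_adj hc hxy hx hy
    exact ⟨by omega, iff_of_false (by omega) hstar⟩

/-- Every tree on `n ≥ 2` vertices has at most `1 + 2^(n-1)` independent sets (the empty
set included), with equality exactly for stars. -/
theorem stmt_4 {V : Type*} [Fintype V] (T : SimpleGraph V) (hT : T.IsTree)
    (hn : 2 ≤ Fintype.card V) :
    {S : Finset V | ∀ a ∈ S, ∀ b ∈ S, ¬ T.Adj a b}.ncard ≤ 1 + 2 ^ (Fintype.card V - 1) ∧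
    ({S : Finset V | ∀ a ∈ S, ∀ b ∈ S, ¬ T.Adj a b}.ncard = 1 + 2 ^ (Fintype.card V - 1) ↔
      IsStarGraph T) :=
  stmt_4_general T hT
end

section
/- (Petrov's inequality) Let M be a random variable on a probability space taking only finitely many values, all nonnegative integers, and let t be an integer with 1 ≤ t ≤ E[M]. Then P(M ≥ t) ≥ (E[M] − t + 1)² / E[M²]. -/
/-!
On `A = {M ≥ t}` we have `M ≤ t - 1` off `A`, so `E[M] - t + 1 ≤ E[M; A]`, and Cauchy–Schwarz
against the indicator of `A` gives `E[M; A]² ≤ P(A) · E[M²]`.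
-/

open MeasureTheory

section
variable {Ω : Type*} [MeasurableSpace Ω] {μ : Measure Ω} {A : Set Ω} {f : Ω → ℝ}

theorem sq_setIntegral_le_measureReal_mul_setIntegral_sq [IsFiniteMeasure μ]
    (hf : IntegrableOn f A μ) (hf2 : IntegrableOn (fun ω => f ω ^ 2) A μ) :
    (∫ ω in A, f ω ∂μ) ^ 2 ≤ μ.real A * ∫ ω in A, f ω ^ 2 ∂μ := by
  -- The quadratic `x ↦ ∫ in A, (f - x)²` is nonnegative, so its discriminant is `≤ 0`.
  have hquad : ∀ x : ℝ, 0 ≤ μ.real A * (x * x) + (-2 * ∫ ω in A, f ω ∂μ) * x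
      + ∫ ω in A, f ω ^ 2 ∂μ := by
    intro x
    have hlin : IntegrableOn (fun ω => f ω ^ 2 - 2 * x * f ω) A μ := hf2.sub (hf.const_mul _)
    have hexpand : ∫ ω in A, (f ω - x) ^ 2 ∂μ
        = ∫ ω in A, f ω ^ 2 ∂μ - 2 * x * ∫ ω in A, f ω ∂μ + μ.real A * x ^ 2 :=
      calc ∫ ω in A, (f ω - x) ^ 2 ∂μ = ∫ ω in A, (f ω ^ 2 - 2 * x * f ω) + x ^ 2 ∂μ := by
            congr 1; ext ω; ring
        _ = _ := by
            rw [integral_add hlin (integrable_const _), integral_sub hf2 (hf.const_mul _),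
              integral_const_mul, setIntegral_const, smul_eq_mul]
    have := hexpand ▸ integral_nonneg (μ := μ.restrict A) fun ω => sq_nonneg (f ω - x)
    linarith
  have := discrim_le_zero hquad
  rw [discrim] at this
  linarith

theorem integral_sub_le_setIntegral [IsProbabilityMeasure μ] (hA : MeasurableSet A)
    (hf : Integrable f μ) {s : ℝ} (hs : 0 ≤ s) (hfs : ∀ ω ∈ Aᶜ, f ω ≤ s) :
    ∫ ω, f ω ∂μ - s ≤ ∫ ω in A, f ω ∂μ := by
  have hcompl : ∫ ω in Aᶜ, f ω ∂μ ≤ s :=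
    calc ∫ ω in Aᶜ, f ω ∂μ ≤ ∫ _ in Aᶜ, s ∂μ :=
          setIntegral_mono_on hf.integrableOn (integrableOn_const (measure_ne_top _ _)) hA.compl hfs
      _ = μ.real Aᶜ * s := by rw [setIntegral_const, smul_eq_mul]
      _ ≤ 1 * s := by gcongr; exact measureReal_le_one
      _ = s := one_mul s
  linarith [integral_add_compl hA hf]

end

theorem stmt_10_general {Ω : Type*} [MeasurableSpace Ω] (μ : Measure Ω) [IsProbabilityMeasure μ]
    (M : Ω → ℕ) (hM : Measurable M)
    (t : ℕ) (ht1 : 1 ≤ t) (ht2 : (t : ℝ) ≤ ∫ ω, (M ω : ℝ) ∂μ) :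
    ((∫ ω, (M ω : ℝ) ∂μ) - (t : ℝ) + 1) ^ 2 / (∫ ω, (M ω : ℝ) ^ 2 ∂μ) ≤
      (μ {ω | t ≤ M ω}).toReal := by
  by_cases hM2 : Integrable (fun ω => (M ω : ℝ) ^ 2) μ
  swap
  · rw [integral_undef hM2, div_zero]; exact ENNReal.toReal_nonneg
  set A := {ω | t ≤ M ω}
  have ht1' : (1 : ℝ) ≤ t := by exact_mod_cast ht1
  have hMle : ∀ ω, (M ω : ℝ) ≤ (M ω : ℝ) ^ 2 := fun ω => by
    exact_mod_cast Nat.le_self_pow two_ne_zero (M ω)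
  have hM1 : Integrable (fun ω => (M ω : ℝ)) μ :=
    hM2.mono' (measurable_from_top.comp hM).aestronglyMeasurable
      (ae_of_all _ fun ω => by simpa using hMle ω)
  have hpos : 0 < ∫ ω, (M ω : ℝ) ^ 2 ∂μ := by linarith [integral_mono hM1 hM2 hMle]
  have htail : ∫ ω, (M ω : ℝ) ∂μ - (t - 1) ≤ ∫ ω in A, (M ω : ℝ) ∂μ := by
    refine integral_sub_le_setIntegral (measurableSet_le measurable_const hM) hM1
      (by linarith) fun ω hω => ?_
    have : M ω + 1 ≤ t := by simpa [A] using hω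
    have : (M ω : ℝ) + 1 ≤ t := by exact_mod_cast this
    linarith
  rw [div_le_iff₀ hpos]
  calc ((∫ ω, (M ω : ℝ) ∂μ) - t + 1) ^ 2 ≤ (∫ ω in A, (M ω : ℝ) ∂μ) ^ 2 :=
        pow_le_pow_left₀ (by linarith) (by linarith) 2
    _ ≤ μ.real A * ∫ ω in A, (M ω : ℝ) ^ 2 ∂μ :=
        sq_setIntegral_le_measureReal_mul_setIntegral_sq hM1.integrableOn hM2.integrableOn
    _ ≤ μ.real A * ∫ ω, (M ω : ℝ) ^ 2 ∂μ :=
        mul_le_mul_of_nonneg_left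
          (setIntegral_le_integral hM2 (ae_of_all _ fun ω => sq_nonneg _)) measureReal_nonneg

/-- Petrov's inequality: for a finitely-valued nonnegative-integer random variable `M`
and an integer `t` with `1 ≤ t ≤ E[M]`, `P(M ≥ t) ≥ (E[M] - t + 1)² / E[M²]`. -/
theorem stmt_10 {Ω : Type*} [MeasurableSpace Ω] (μ : Measure Ω) [IsProbabilityMeasure μ]
    (M : Ω → ℕ) (hM : Measurable M) (hfin : (Set.range M).Finite)
    (t : ℕ) (ht1 : 1 ≤ t) (ht2 : (t : ℝ) ≤ ∫ ω, (M ω : ℝ) ∂μ) :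
    ((∫ ω, (M ω : ℝ) ∂μ) - (t : ℝ) + 1) ^ 2 / (∫ ω, (M ω : ℝ) ^ 2 ∂μ) ≤
      (μ {ω | t ≤ M ω}).toReal :=
  stmt_10_general μ M hM t ht1 ht2
end

section
/- Every tree T on n ≥ 2 vertices has at most 2^(n−1) + n − 1 subtrees, where a subtree is a nonempty subset S of V(T) whose induced subgraph T[S] is connected. Moreover, equality holds if and only if T is a star, i.e., one vertex adjacent to all other n − 1 vertices and no other edges. -/
open Finset

/-!
A connected vertex set `S` with at least two vertices is determined by the edges of `T` lying
inside it, since each vertex of `S` lies on one of them; that edge set is nonempty, so there are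
at most `2^(n-1) - 1` such `S`, besides the `n` singletons. If `T` is not a star, it has a walk
`a b c d` with `a ≠ c` and `b ≠ d`, and `{ab, cd}` is not such an edge set either: a set
containing both edges also contains `bc`.
-/

lemma Finset.ncard_setOf_mem {α : Type*} [Fintype α] (a : α) :
    {S : Finset α | a ∈ S}.ncard = 2 ^ (Fintype.card α - 1) := by
  classical
  have hsub : ∀ {S : Finset α}, S ∈ (univ.erase a).powerset ↔ a ∉ S := by
    simp [subset_erase]
  have hImage : {S : Finset α | a ∈ S} = insert a '' ((univ.erase a).powerset : Set _) := by
    ext S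
    refine ⟨fun h => ⟨S.erase a, hsub.mpr (notMem_erase a S), insert_erase h⟩, ?_⟩
    rintro ⟨S, -, rfl⟩
    exact mem_insert_self a S
  have hInj : Set.InjOn (insert a) ((univ.erase a).powerset : Set (Finset α)) :=
    fun S hS S' hS' h => by rw [← erase_insert (hsub.mp hS), h, erase_insert (hsub.mp hS')]
  rw [hImage, hInj.ncard_image, Set.ncard_coe_finset, card_powerset,
    card_erase_of_mem (mem_univ a), card_univ]

namespace SimpleGraph

variable {V : Type*} {G : SimpleGraph V}

/-- For a tree, these are its subtrees. -/
def connectedSets (G : SimpleGraph V) : Set (Finset V) :=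
  {S | S.Nonempty ∧ (G.induce (S : Set V)).Connected}

lemma induce_connected_of_forall_adj {s : Set V} {u : V} (hu : u ∈ s)
    (hadj : ∀ v ∈ s, v ≠ u → G.Adj u v) : (G.induce s).Connected := by
  refine G.induce_connected_of_patches u hu fun {v} hv => ?_
  by_cases hvu : v = u
  · subst hvu
    exact ⟨{v}, Set.singleton_subset_iff.mpr hv, rfl, rfl, Reachable.refl _⟩
  · exact ⟨{u, v}, Set.insert_subset hu (Set.singleton_subset_iff.mpr hv), by simp, by simp,
      (G.induce_pair_connected_of_adj (hadj v hv hvu)).preconnected _ _⟩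

lemma exists_adj_of_connected_induce {s : Set V} (hs : (G.induce s).Connected)
    (hnt : s.Nontrivial) {v : V} (hv : v ∈ s) : ∃ w ∈ s, G.Adj v w := by
  have : Nontrivial s := Set.nontrivial_coe_sort.mpr hnt
  obtain ⟨w, hw⟩ := hs.preconnected.exists_adj_of_nontrivial ⟨v, hv⟩
  exact ⟨w, w.2, hw⟩

lemma ncard_connectedSets_le [Fintype V] :
    G.connectedSets.ncard ≤ Fintype.card V + {S ∈ G.connectedSets | 2 ≤ #S}.ncard := by
  have hsplit : G.connectedSets ⊆ Set.range singleton ∪ {S ∈ G.connectedSets | 2 ≤ #S} := by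
    intro S hS
    obtain hS1 | hS2 := (Nat.one_le_iff_ne_zero.mpr (card_ne_zero.mpr hS.1)).eq_or_lt'
    · obtain ⟨v, rfl⟩ := card_eq_one.mp hS1
      exact Or.inl ⟨v, rfl⟩
    · exact Or.inr ⟨hS, hS2⟩
  calc G.connectedSets.ncard
      ≤ (Set.range singleton ∪ {S ∈ G.connectedSets | 2 ≤ #S}).ncard := Set.ncard_le_ncard hsplit
    _ ≤ _ := (Set.ncard_union_le _ _).trans_eq (by
        rw [Set.ncard_range_of_injective singleton_injective, Nat.card_eq_fintype_card])

lemma Preconnected.isStarGraph_of_backtrack_of_leaf (hG : G.Preconnected)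
    (hback : ∀ ⦃a b c d⦄, G.Adj a b → G.Adj b c → G.Adj c d → a = c ∨ b = d)
    {u v : V} (hvu : G.Adj v u) (hv : ∀ w, G.Adj v w → w = u) : IsStarGraph G := by
  have hclosed : ∀ ⦃x y⦄, G.Adj x y → (x = u ∨ G.Adj u x) → y = u ∨ G.Adj u y := by
    rintro x y hxy (rfl | hux)
    · exact Or.inr hxy
    · by_contra! h
      rcases hback hvu hux hxy with rfl | rfl
      exacts [h.1 (hv y hxy), h.1 rfl]
  have hnear : ∀ x, x = u ∨ G.Adj u x := by
    have hwalk : ∀ {a x} (_ : G.Walk a x), (a = u ∨ G.Adj u a) → x = u ∨ G.Adj u x := by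
      intro a x p
      induction p with
      | nil => exact id
      | cons h _ ih => exact fun ha => ih (hclosed h ha)
    exact fun x => (hG u x).elim fun p => hwalk p (Or.inl rfl)
  refine ⟨u, fun a b => ⟨fun hab => ⟨hab.ne, ?_⟩, ?_⟩⟩
  · by_contra! h
    rcases hback hab ((hnear b).resolve_left h.2).symm ((hnear a).resolve_left h.1) with h' | h'
    exacts [h.1 h', hab.ne h'.symm]
  · rintro ⟨hne, rfl | rfl⟩
    · exact (hnear b).resolve_left hne.symm
    · exact ((hnear a).resolve_left hne).symm

lemma Preconnected.isStarGraph_of_backtrack [Nontrivial V] (hG : G.Preconnected)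
    (hback : ∀ ⦃a b c d⦄, G.Adj a b → G.Adj b c → G.Adj c d → a = c ∨ b = d) :
    IsStarGraph G := by
  obtain ⟨v, -⟩ := exists_pair_ne V
  obtain ⟨u, hvu⟩ := hG.exists_adj_of_nontrivial v
  by_cases hv : ∀ w, G.Adj v w → w = u
  · exact hG.isStarGraph_of_backtrack_of_leaf hback hvu hv
  push Not at hv
  obtain ⟨y, hvy, hyu⟩ := hv
  refine hG.isStarGraph_of_backtrack_of_leaf hback hvu.symm fun x hux => ?_
  by_contra hxv
  rcases hback hux.symm hvu.symm hvy with h | h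
  exacts [hxv h, hyu h.symm]

section Edges

variable [DecidableEq V] [Fintype G.edgeSet]

def edgesWithin (G : SimpleGraph V) [Fintype G.edgeSet] (S : Finset V) : Finset (Sym2 V) :=
  G.edgeFinset ∩ S.sym2

lemma mk_mem_edgesWithin {S : Finset V} {a b : V} :
    s(a, b) ∈ G.edgesWithin S ↔ G.Adj a b ∧ a ∈ S ∧ b ∈ S := by
  simp [edgesWithin]

lemma subset_of_edgesWithin_subset {S S' : Finset V} (hS : ∀ v ∈ S, ∃ w ∈ S, G.Adj v w)
    (h : G.edgesWithin S ⊆ G.edgesWithin S') : S ⊆ S' := by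
  intro v hv
  obtain ⟨w, hw, hvw⟩ := hS v hv
  exact (mk_mem_edgesWithin.mp (h (mk_mem_edgesWithin.mpr ⟨hvw, hv, hw⟩))).2.1

lemma edgesWithin_ne_pair {a b c d : V} (hbc : G.Adj b c) (hac : a ≠ c) (hbd : b ≠ d)
    (S : Finset V) : G.edgesWithin S ≠ {s(a, b), s(c, d)} := by
  intro h
  have hab : s(a, b) ∈ G.edgesWithin S := by simp [h]
  have hcd : s(c, d) ∈ G.edgesWithin S := by simp [h]
  have hbc' : s(b, c) ∈ G.edgesWithin S :=
    mk_mem_edgesWithin.mpr ⟨hbc, (mk_mem_edgesWithin.mp hab).2.2, (mk_mem_edgesWithin.mp hcd).2.1⟩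
  rw [h] at hbc'
  simp only [mem_insert, mem_singleton, Sym2.eq_iff] at hbc'
  have := hbc.ne
  grind

lemma ncard_connectedSets_two_le_add_card_le [Fintype V] (𝓕 : Finset (Finset (Sym2 V)))
    (h𝓕 : 𝓕 ⊆ G.edgeFinset.powerset)
    (hmiss : ∀ S ∈ G.connectedSets, 2 ≤ #S → G.edgesWithin S ∉ 𝓕) :
    {S ∈ G.connectedSets | 2 ≤ #S}.ncard + #𝓕 ≤ 2 ^ #G.edgeFinset := by
  have hnoIsolated : ∀ S ∈ {S ∈ G.connectedSets | 2 ≤ #S}, ∀ v ∈ S, ∃ w ∈ S, G.Adj v w :=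
    fun S hS v hv => exists_adj_of_connected_induce hS.1.2 (one_lt_card_iff_nontrivial.mp hS.2) hv
  have hinj : Set.InjOn G.edgesWithin {S ∈ G.connectedSets | 2 ≤ #S} := fun S hS S' hS' h =>
    (subset_of_edgesWithin_subset (hnoIsolated S hS) h.le).antisymm
      (subset_of_edgesWithin_subset (hnoIsolated S' hS') h.ge)
  have hmaps : Set.MapsTo G.edgesWithin {S ∈ G.connectedSets | 2 ≤ #S}
      ↑(G.edgeFinset.powerset \ 𝓕) := fun S hS =>
    mem_sdiff.mpr ⟨mem_powerset.mpr inter_subset_left, hmiss S hS.1 hS.2⟩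
  have hcard := Set.ncard_le_ncard_of_injOn _ hmaps hinj
  rw [Set.ncard_coe_finset, card_sdiff_of_subset h𝓕, card_powerset] at hcard
  have := card_powerset G.edgeFinset ▸ card_le_card h𝓕
  omega

lemma edgesWithin_nonempty {S : Finset V} (hS : S ∈ G.connectedSets) (hS2 : 2 ≤ #S) :
    (G.edgesWithin S).Nonempty := by
  obtain ⟨v, hv⟩ := hS.1
  obtain ⟨w, hw, hvw⟩ := exists_adj_of_connected_induce hS.2 (one_lt_card_iff_nontrivial.mp hS2) hv
  exact ⟨_, mk_mem_edgesWithin.mpr ⟨hvw, hv, hw⟩⟩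

lemma ncard_connectedSets_two_le_lt [Fintype V] :
    {S ∈ G.connectedSets | 2 ≤ #S}.ncard < 2 ^ #G.edgeFinset :=
  Nat.lt_of_add_one_le <| ncard_connectedSets_two_le_add_card_le (G := G) {∅} (by simp)
    fun _ hS hS2 => by simpa using (edgesWithin_nonempty hS hS2).ne_empty

lemma ncard_connectedSets_two_le_add_two_le [Fintype V] {a b c d : V} (hab : G.Adj a b)
    (hbc : G.Adj b c) (hcd : G.Adj c d) (hac : a ≠ c) (hbd : b ≠ d) :
    {S ∈ G.connectedSets | 2 ≤ #S}.ncard + 2 ≤ 2 ^ #G.edgeFinset := by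
  have key := ncard_connectedSets_two_le_add_card_le (G := G) {∅, {s(a, b), s(c, d)}}
    (by simp [insert_subset_iff, hab, hcd]) fun S hS hS2 => by
      simpa [(edgesWithin_nonempty hS hS2).ne_empty] using edgesWithin_ne_pair hbc hac hbd S
  rwa [card_pair (insert_ne_empty _ _).symm] at key

end Edges

end SimpleGraph

lemma IsStarGraph.le_ncard_connectedSets {V : Type*} [Fintype V] {G : SimpleGraph V}
    (hG : IsStarGraph G) :
    2 ^ (Fintype.card V - 1) + Fintype.card V - 1 ≤ G.connectedSets.ncard := by
  obtain ⟨c, hc⟩ := hG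
  have hcenter : {S : Finset V | c ∈ S} ⊆ G.connectedSets := fun S hS =>
    ⟨⟨c, hS⟩, G.induce_connected_of_forall_adj (mem_coe.mpr hS) fun v _ hvc =>
      (hc c v).mpr ⟨hvc.symm, Or.inl rfl⟩⟩
  have hleaves : singleton '' ({c}ᶜ : Set V) ⊆ G.connectedSets := by
    rintro _ ⟨v, -, rfl⟩
    exact ⟨singleton_nonempty v, G.induce_connected_of_forall_adj (u := v) (by simp)
      fun w hw hwv => absurd (by simpa using hw) hwv⟩
  have hdisj : Disjoint {S : Finset V | c ∈ S} (singleton '' ({c}ᶜ : Set V)) := by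
    rw [Set.disjoint_left]
    rintro S hcS ⟨v, hvc, rfl⟩
    exact hvc (mem_singleton.mp hcS).symm
  have hpos : 0 < Fintype.card V := Fintype.card_pos_iff.mpr ⟨c⟩
  calc 2 ^ (Fintype.card V - 1) + Fintype.card V - 1
      = {S : Finset V | c ∈ S}.ncard + (singleton '' ({c}ᶜ : Set V)).ncard := by
        rw [Finset.ncard_setOf_mem, Set.ncard_image_of_injective _ singleton_injective,
          Set.ncard_compl, Set.ncard_singleton, Nat.card_eq_fintype_card]
        exact Nat.add_sub_assoc hpos _
    _ = ({S | c ∈ S} ∪ singleton '' {c}ᶜ).ncard := (Set.ncard_union_eq hdisj).symm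
    _ ≤ G.connectedSets.ncard := Set.ncard_le_ncard (Set.union_subset hcenter hleaves)

open SimpleGraph in
/-- Every tree on `n ≥ 2` vertices has at most `2^(n-1) + n - 1` subtrees (nonempty vertex
subsets inducing a connected subgraph), with equality exactly for stars. -/
theorem stmt_19 {V : Type*} [Fintype V] (T : SimpleGraph V) (hT : T.IsTree)
    (hn : 2 ≤ Fintype.card V) :
    {S : Finset V | S.Nonempty ∧ (T.induce (S : Set V)).Connected}.ncard ≤
      2 ^ (Fintype.card V - 1) + Fintype.card V - 1 ∧
    ({S : Finset V | S.Nonempty ∧ (T.induce (S : Set V)).Connected}.ncard =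
      2 ^ (Fintype.card V - 1) + Fintype.card V - 1 ↔ IsStarGraph T) := by
  classical
  change T.connectedSets.ncard ≤ _ ∧ (T.connectedSets.ncard = _ ↔ _)
  have : Nontrivial V := Fintype.one_lt_card_iff_nontrivial.mp hn
  have hE : Fintype.card V - 1 = #T.edgeFinset := by have := hT.card_edgeFinset; omega
  have hsplit := T.ncard_connectedSets_le
  have hbig := T.ncard_connectedSets_two_le_lt
  rw [hE]
  have hbound : T.connectedSets.ncard ≤ 2 ^ #T.edgeFinset + Fintype.card V - 1 := by omega
  refine ⟨hbound, fun heq => ?_, fun hstar => hbound.antisymm (hE ▸ hstar.le_ncard_connectedSets)⟩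
  refine hT.connected.preconnected.isStarGraph_of_backtrack fun a b c d hab hbc hcd => ?_
  by_contra! h
  have := ncard_connectedSets_two_le_add_two_le hab hbc hcd h.1 h.2
  omega
end
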